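/- Under the same adaptive revelation setting, the KL divergence between the data distribution p_X and the sampler distribution q (which draws each batch's coordinates independently from their conditional marginals) equals E_{X ~ p_X}[ Σ_{t=1}^T KL( p(X^{D_t} | X^{W_{t-1}}) || Π_{i∈D_t} p(X^i | X^{W_{t-1}}) ) ], i.e., the sum over iterations of the pointwise KL divergence between the true conditional joint of the batch and the product of its conditional marginals, evaluated along the trajectory. -/

import Mathlib

/-!
Where `p(x) > 0`, the probabilities `m_t(x) = P(X^{W_t} = x^{W_t})` telescope from `m_0 = 1` to
`m_T = p(x)`, and `m_{t+1}(x) / m_t(x)` is the true conditional joint of batch `t` at its observed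
value. Hence `log (p/q)(x)` is the sum over steps of the batch log-ratios `ℓ_t(x)`. Because `W_t` is
a stopping set (if `x'` agrees with `x` on `W_t x` then `W_t x' = W_t x`), the batch KL at `x` is the
conditional mean of `ℓ_t(X)` given the history `(W_t, X^{W_t})`, and the tower property gives
`E[ℓ_t(X)] = E[KL_t(X)]`. Steps at or after `T x` reveal nothing and contribute zero on both sides,
so all sums over `t < T x` can be taken over a common range.
-/

open Finset

/-- Distribution (pmf) of a random variable `X` on a finite probability space `(Ω, μ)`. -/
noncomputable def distOf {Ω α : Type*} [Fintype Ω] [DecidableEq α]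
    (μ : Ω → ℝ) (X : Ω → α) : α → ℝ :=
  fun a => ∑ ω ∈ Finset.univ.filter (fun ω => X ω = a), μ ω

/-- Kullback–Leibler divergence on a finite alphabet (convention `0 * log _ = 0`). -/
noncomputable def KLdiv {α : Type*} [Fintype α] (p q : α → ℝ) : ℝ :=
  ∑ a, p a * Real.log (p a / q a)

/-- Shannon entropy of a pmf on a finite alphabet. -/
noncomputable def entOf {α : Type*} [Fintype α] (p : α → ℝ) : ℝ :=
  -∑ a, p a * Real.log (p a)

/-- Mutual information `I(X;Y) = KL(p_{X,Y} ‖ p_X p_Y)`. -/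
noncomputable def mutInfo {Ω α β : Type*} [Fintype Ω] [Fintype α] [Fintype β]
    [DecidableEq α] [DecidableEq β]
    (μ : Ω → ℝ) (X : Ω → α) (Y : Ω → β) : ℝ :=
  KLdiv (distOf μ (fun ω => (X ω, Y ω))) (fun ab => distOf μ X ab.1 * distOf μ Y ab.2)

/-- The probability measure `μ` conditioned on the event `Z = z`. -/
noncomputable def pcond {Ω γ : Type*} [Fintype Ω] [DecidableEq γ]
    (μ : Ω → ℝ) (Z : Ω → γ) (z : γ) : Ω → ℝ :=
  fun ω => if Z ω = z then μ ω / distOf μ Z z else 0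

/-- Conditional mutual information `I(X;Y∣Z)`. -/
noncomputable def condMutInfo {Ω α β γ : Type*} [Fintype Ω] [Fintype α] [Fintype β] [Fintype γ]
    [DecidableEq α] [DecidableEq β] [DecidableEq γ]
    (μ : Ω → ℝ) (X : Ω → α) (Y : Ω → β) (Z : Ω → γ) : ℝ :=
  ∑ z, distOf μ Z z * mutInfo (pcond μ Z z) X Y

/-- Restriction of `x : Fin L → 𝕏` to a subset `S` of coordinates. -/
def restr {L : ℕ} {𝕏 : Type*} (S : Finset (Fin L)) (x : Fin L → 𝕏) : ↥S → 𝕏 :=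
  fun i => x i.1

/-- `μ` conditioned on the event that `X` agrees with `x` on the coordinate set `W`. -/
noncomputable def condOn {Ω : Type*} {L : ℕ} {𝕏 : Type*} [Fintype Ω] [Fintype 𝕏] [DecidableEq 𝕏]
    (μ : Ω → ℝ) (X : Ω → Fin L → 𝕏) (W : Finset (Fin L)) (x : Fin L → 𝕏) : Ω → ℝ :=
  pcond μ (fun ω => restr W (X ω)) (restr W x)

section FiniteProbability

variable {Ω α β γ : Type*} [Fintype Ω] [DecidableEq α] [DecidableEq β] [DecidableEq γ]

theorem sum_distOf_mul [Fintype α] (μ : Ω → ℝ) (X : Ω → α) (F : α → ℝ) :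
    ∑ a, distOf μ X a * F a = ∑ ω, μ ω * F (X ω) := by
  rw [← sum_fiberwise univ X fun ω => μ ω * F (X ω)]
  refine sum_congr rfl fun a _ => ?_
  rw [distOf, sum_mul]
  exact sum_congr rfl fun ω hω => by rw [(mem_filter.mp hω).2]

theorem distOf_nonneg {μ : Ω → ℝ} (hμ : ∀ ω, 0 ≤ μ ω) (X : Ω → α) (a : α) :
    0 ≤ distOf μ X a :=
  sum_nonneg fun ω _ => hμ ω

theorem sum_distOf_mul_congr [Fintype α] {μ : Ω → ℝ} (hμ : ∀ ω, 0 ≤ μ ω) {X : Ω → α}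
    {f g : α → ℝ} (h : ∀ a, 0 < distOf μ X a → f a = g a) :
    ∑ a, distOf μ X a * f a = ∑ a, distOf μ X a * g a := by
  refine sum_congr rfl fun a _ => ?_
  rcases (distOf_nonneg hμ X a).eq_or_lt with h0 | hpos
  · rw [← h0, zero_mul, zero_mul]
  · rw [h a hpos]

theorem distOf_le_sum_filter {μ : Ω → ℝ} (hμ : ∀ ω, 0 ≤ μ ω) {X : Ω → α} {a : α}
    {P : Ω → Prop} [DecidablePred P] (h : ∀ ω, X ω = a → P ω) :
    distOf μ X a ≤ ∑ ω ∈ univ.filter P, μ ω :=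
  sum_le_sum_of_subset_of_nonneg (monotone_filter_right _ fun ω _ => h ω)
    fun ω _ _ => hμ ω

theorem distOf_pcond (μ : Ω → ℝ) (Z : Ω → γ) (z : γ) (Y : Ω → α) (a : α) :
    distOf (pcond μ Z z) Y a =
      (∑ ω ∈ univ.filter (fun ω => Y ω = a ∧ Z ω = z), μ ω) / distOf μ Z z := by
  rw [distOf, sum_div, sum_filter, sum_filter]
  refine sum_congr rfl fun ω _ => ?_
  by_cases hY : Y ω = a <;> by_cases hZ : Z ω = z <;> simp [pcond, hY, hZ]

theorem sum_pcond {μ : Ω → ℝ} {Z : Ω → γ} {z : γ} (h : distOf μ Z z ≠ 0) :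
    ∑ ω, pcond μ Z z ω = 1 := by
  rw [← div_self h, distOf, sum_div, sum_filter]
  refine sum_congr rfl fun ω _ => ?_
  by_cases hZ : Z ω = z <;> simp [pcond, distOf, hZ]

theorem pcond_congr (μ : Ω → ℝ) {Z : Ω → γ} {Z' : Ω → β} {z : γ} {z' : β}
    (h : ∀ ω, Z ω = z ↔ Z' ω = z') : pcond μ Z z = pcond μ Z' z' := by
  funext ω
  simp only [pcond, distOf, h]

theorem sum_distOf_mul_sum_pcond [Fintype γ] {μ : Ω → ℝ} (hμ : ∀ ω, 0 ≤ μ ω) (Z : Ω → γ)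
    (g : Ω → ℝ) : ∑ z, distOf μ Z z * ∑ ω, pcond μ Z z ω * g ω = ∑ ω, μ ω * g ω := by
  rw [← sum_fiberwise univ Z fun ω => μ ω * g ω]
  refine sum_congr rfl fun z _ => ?_
  have hfiber : ∑ ω, pcond μ Z z ω * g ω =
      ∑ ω ∈ univ.filter (Z · = z), μ ω / distOf μ Z z * g ω := by
    rw [sum_filter]
    exact sum_congr rfl fun ω _ => by by_cases hZ : Z ω = z <;> simp [pcond, hZ]
  rw [hfiber, mul_sum]
  by_cases h0 : distOf μ Z z = 0
  · have hμ0 : ∀ ω ∈ univ.filter (Z · = z), μ ω = 0 :=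
      (sum_eq_zero_iff_of_nonneg fun ω _ => hμ ω).mp h0
    exact sum_congr rfl fun ω hω => by simp [hμ0 ω hω]
  · exact sum_congr rfl fun ω _ => by field_simp

theorem KLdiv_distOf [Fintype α] (ν : Ω → ℝ) (Y : Ω → α) (q : α → ℝ) :
    KLdiv (distOf ν Y) q = ∑ ω, ν ω * Real.log (distOf ν Y (Y ω) / q (Y ω)) :=
  sum_distOf_mul ν Y fun a => Real.log (distOf ν Y a / q a)

theorem KLdiv_distOf_prod_of_isEmpty {ι 𝕏 : Type*} [Fintype ι] [DecidableEq ι] [IsEmpty ι]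
    [Fintype 𝕏] [DecidableEq 𝕏] {ν : Ω → ℝ} (hν : ∑ ω, ν ω = 1) (Y : Ω → ι → 𝕏) :
    KLdiv (distOf ν Y) (fun y => ∏ i, distOf ν (fun ω => Y ω i) (y i)) = 0 := by
  have hY : ∀ y, distOf ν Y y = 1 := fun y => by
    rw [distOf, filter_true_of_mem fun ω _ => Subsingleton.elim (Y ω) y, hν]
  simp [KLdiv, hY]

end FiniteProbability

section Coordinates

variable {𝕏 : Type*} {L : ℕ}

theorem restr_eq_restr_iff {S : Finset (Fin L)} {x y : Fin L → 𝕏} :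
    restr S x = restr S y ↔ ∀ i ∈ S, x i = y i :=
  ⟨fun h i hi => congrFun h ⟨i, hi⟩, fun h => funext fun i => h i.1 i.2⟩

variable {Ω : Type*} [Fintype Ω] [DecidableEq 𝕏]

noncomputable def cylinderMass (μ : Ω → ℝ) (X : Ω → Fin L → 𝕏) (S : Finset (Fin L))
    (x : Fin L → 𝕏) : ℝ :=
  distOf μ (fun ω => restr S (X ω)) (restr S x)

theorem cylinderMass_empty {μ : Ω → ℝ} (hμ : ∑ ω, μ ω = 1) (X : Ω → Fin L → 𝕏)
    (x : Fin L → 𝕏) : cylinderMass μ X ∅ x = 1 := by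
  rw [cylinderMass, distOf, filter_true_of_mem fun ω _ => Subsingleton.elim _ _, hμ]

theorem cylinderMass_univ (μ : Ω → ℝ) (X : Ω → Fin L → 𝕏) (x : Fin L → 𝕏) :
    cylinderMass μ X univ x = distOf μ X x := by
  simp only [cylinderMass, distOf, restr_eq_restr_iff, mem_univ, forall_const, ← funext_iff]

theorem distOf_le_cylinderMass {μ : Ω → ℝ} (hμ : ∀ ω, 0 ≤ μ ω) (X : Ω → Fin L → 𝕏)
    (S : Finset (Fin L)) (x : Fin L → 𝕏) : distOf μ X x ≤ cylinderMass μ X S x :=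
  distOf_le_sum_filter hμ fun ω h => by simp [h]

variable [Fintype 𝕏]

theorem condOn_congr (μ : Ω → ℝ) (X : Ω → Fin L → 𝕏) {S : Finset (Fin L)}
    {x x' : Fin L → 𝕏} (h : ∀ i ∈ S, x i = x' i) : condOn μ X S x = condOn μ X S x' := by
  rw [condOn, restr_eq_restr_iff.mpr h, condOn]

theorem restr_eq_of_condOn_ne_zero {μ : Ω → ℝ} {X : Ω → Fin L → 𝕏} {S : Finset (Fin L)}
    {x : Fin L → 𝕏} {ω : Ω} (h : condOn μ X S x ω ≠ 0) : restr S (X ω) = restr S x := by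
  by_contra hne
  exact h (if_neg hne)

theorem distOf_condOn_restr_sdiff (μ : Ω → ℝ) (X : Ω → Fin L → 𝕏) {A B : Finset (Fin L)}
    (hAB : A ⊆ B) (x : Fin L → 𝕏) :
    distOf (condOn μ X A x) (fun ω => restr (B \ A) (X ω)) (restr (B \ A) x) =
      cylinderMass μ X B x / cylinderMass μ X A x := by
  rw [condOn, distOf_pcond, cylinderMass, cylinderMass, distOf]
  congr 2
  ext ω
  simp only [mem_filter, mem_univ, true_and, restr_eq_restr_iff, mem_sdiff]
  constructor
  · rintro ⟨hnew, hold⟩ i hi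
    by_cases hiA : i ∈ A
    exacts [hold i hiA, hnew i ⟨hi, hiA⟩]
  · exact fun h => ⟨fun i hi => h i hi.1, fun i hi => h i (hAB hi)⟩

theorem distOf_condOn_coord_pos {μ : Ω → ℝ} (hμ : ∀ ω, 0 ≤ μ ω) (X : Ω → Fin L → 𝕏)
    (S : Finset (Fin L)) {x : Fin L → 𝕏} (hx : 0 < distOf μ X x) (i : Fin L) :
    0 < distOf (condOn μ X S x) (fun ω => X ω i) (x i) := by
  rw [condOn, distOf_pcond]
  refine div_pos (hx.trans_le (distOf_le_sum_filter hμ fun ω h => by rw [h]; simp))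
    (hx.trans_le (distOf_le_cylinderMass hμ X S x))

end Coordinates

section StoppingSets

variable {𝕏 : Type*} {L : ℕ}

def IsStoppingSet (S : (Fin L → 𝕏) → Finset (Fin L)) : Prop :=
  ∀ x x', (∀ i ∈ S x, x i = x' i) → S x = S x'

/-- `(S x, x^{S x})` encoded in a type that does not depend on `S x`. -/
def history (S : (Fin L → 𝕏) → Finset (Fin L)) (x : Fin L → 𝕏) :
    Finset (Fin L) × (Fin L → Option 𝕏) :=
  (S x, fun i => if i ∈ S x then some (x i) else none)

theorem isStoppingSet_of_adapted {W : ℕ → (Fin L → 𝕏) → Finset (Fin L)}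
    (hW0 : ∀ x, W 0 x = ∅) (hmono : ∀ x t, W t x ⊆ W (t+1) x)
    (hadapt : ∀ t x x', W t x = W t x' → (∀ i ∈ W t x, x i = x' i) →
      W (t+1) x = W (t+1) x')
    (t : ℕ) : IsStoppingSet (W t) := by
  induction t with
  | zero => exact fun x x' _ => by rw [hW0, hW0]
  | succ t ih =>
    intro x x' hag
    have hag' : ∀ i ∈ W t x, x i = x' i := fun i hi => hag i (hmono x t hi)
    exact hadapt t x x' (ih x x' hag') hag'

namespace IsStoppingSet

variable {S : (Fin L → 𝕏) → Finset (Fin L)}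

theorem history_eq_iff (hS : IsStoppingSet S) {x x' : Fin L → 𝕏} :
    history S x' = history S x ↔ restr (S x) x' = restr (S x) x := by
  rw [restr_eq_restr_iff]
  constructor
  · intro h i hi
    have hval := congrFun (Prod.ext_iff.mp h).2 i
    simp only [history, hi, if_true] at hval
    split_ifs at hval
    exact Option.some_injective _ hval
  · intro h
    have hSx : S x = S x' := hS x x' fun i hi => (h i hi).symm
    simp only [history, ← hSx, Prod.mk.injEq, true_and]
    funext i
    split_ifs with hi
    exacts [congrArg some (h i hi), rfl]

variable {Ω : Type*} [Fintype Ω] [Fintype 𝕏] [DecidableEq 𝕏]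

theorem condOn_eq_pcond_history (hS : IsStoppingSet S) (μ : Ω → ℝ) (X : Ω → Fin L → 𝕏)
    (x : Fin L → 𝕏) :
    condOn μ X (S x) x = pcond μ (fun ω => history S (X ω)) (history S x) :=
  pcond_congr μ fun _ => hS.history_eq_iff.symm

theorem sum_distOf_mul_sum_condOn (hS : IsStoppingSet S) {μ : Ω → ℝ} (hμ : ∀ ω, 0 ≤ μ ω)
    (X : Ω → Fin L → 𝕏) (f : (Fin L → 𝕏) → ℝ) :
    ∑ x, distOf μ X x * ∑ ω, condOn μ X (S x) x ω * f (X ω) = ∑ x, distOf μ X x * f x := by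
  classical
  let H : Ω → Finset (Fin L) × (Fin L → Option 𝕏) := fun ω => history S (X ω)
  let G h := ∑ ω, pcond μ H h ω * f (X ω)
  calc ∑ x, distOf μ X x * ∑ ω, condOn μ X (S x) x ω * f (X ω)
      = ∑ x, distOf μ X x * G (history S x) := by
        simp only [hS.condOn_eq_pcond_history, G, H]
    _ = ∑ h, distOf μ H h * G h := by
        rw [sum_distOf_mul, ← sum_distOf_mul μ H G]
    _ = ∑ x, distOf μ X x * f x := by
        rw [sum_distOf_mul_sum_pcond hμ, sum_distOf_mul]

end IsStoppingSet

end StoppingSets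

section AdaptiveSampler

variable {𝕏 : Type*} {L : ℕ}

def batch (W : ℕ → (Fin L → 𝕏) → Finset (Fin L)) (t : ℕ) (x : Fin L → 𝕏) : Finset (Fin L) :=
  W (t+1) x \ W t x

theorem eq_univ_of_le {W : ℕ → (Fin L → 𝕏) → Finset (Fin L)}
    (hmono : ∀ x t, W t x ⊆ W (t+1) x) {T : (Fin L → 𝕏) → ℕ}
    (hfull : ∀ x, W (T x) x = univ) {t : ℕ} {x : Fin L → 𝕏} (ht : T x ≤ t) : W t x = univ :=
  univ_subset_iff.mp (hfull x ▸ monotone_nat_of_le_succ (hmono x) ht)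

theorem batch_eq_empty_of_le {W : ℕ → (Fin L → 𝕏) → Finset (Fin L)}
    (hmono : ∀ x t, W t x ⊆ W (t+1) x) {T : (Fin L → 𝕏) → ℕ}
    (hfull : ∀ x, W (T x) x = univ) {t : ℕ} {x : Fin L → 𝕏} (ht : T x ≤ t) :
    batch W t x = ∅ := by
  rw [batch, eq_univ_of_le hmono hfull (ht.trans t.le_succ), eq_univ_of_le hmono hfull ht,
    Finset.sdiff_self]

variable {Ω : Type*} [Fintype Ω] [Fintype 𝕏] [DecidableEq 𝕏]

noncomputable def batchLaw (μ : Ω → ℝ) (X : Ω → Fin L → 𝕏) (A B : Finset (Fin L))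
    (x : Fin L → 𝕏) : (↥B → 𝕏) → ℝ :=
  distOf (condOn μ X A x) (fun ω => restr B (X ω))

noncomputable def batchProdLaw (μ : Ω → ℝ) (X : Ω → Fin L → 𝕏) (A B : Finset (Fin L))
    (x : Fin L → 𝕏) : (↥B → 𝕏) → ℝ :=
  fun y => ∏ i : ↥B, distOf (condOn μ X A x) (fun ω => X ω i) (y i)

variable (μ : Ω → ℝ) (X : Ω → Fin L → 𝕏) (W : ℕ → (Fin L → 𝕏) → Finset (Fin L))

noncomputable def stepKL (t : ℕ) (x : Fin L → 𝕏) : ℝ :=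
  KLdiv (batchLaw μ X (W t x) (batch W t x) x) (batchProdLaw μ X (W t x) (batch W t x) x)

noncomputable def stepLogRatio (t : ℕ) (x : Fin L → 𝕏) : ℝ :=
  Real.log (batchLaw μ X (W t x) (batch W t x) x (restr (batch W t x) x) /
    batchProdLaw μ X (W t x) (batch W t x) x (restr (batch W t x) x))

noncomputable def samplerDensity (T : (Fin L → 𝕏) → ℕ) (x : Fin L → 𝕏) : ℝ :=
  ∏ t ∈ range (T x), ∏ i ∈ batch W t x, distOf (condOn μ X (W t x) x) (fun ω => X ω i) (x i)

variable {μ X W}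

theorem stepLogRatio_eq_of_agree {t : ℕ} (hstop : IsStoppingSet (W t))
    (hadapt : ∀ t x x', W t x = W t x' → (∀ i ∈ W t x, x i = x' i) →
      W (t+1) x = W (t+1) x')
    {x x' : Fin L → 𝕏} (hag : ∀ i ∈ W t x, x i = x' i) :
    Real.log (batchLaw μ X (W t x) (batch W t x) x (restr (batch W t x) x') /
      batchProdLaw μ X (W t x) (batch W t x) x (restr (batch W t x) x')) =
      stepLogRatio μ X W t x' := by
  have hcond : condOn μ X (W t x) x = condOn μ X (W t x) x' := condOn_congr μ X hag
  have hW : W t x = W t x' := hstop x x' hag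
  have hW' : W (t+1) x = W (t+1) x' := hadapt t x x' hW hag
  unfold stepLogRatio batchLaw batchProdLaw batch
  rw [hcond, hW', hW]

theorem stepKL_eq_sum_condOn {t : ℕ} (hstop : IsStoppingSet (W t))
    (hadapt : ∀ t x x', W t x = W t x' → (∀ i ∈ W t x, x i = x' i) →
      W (t+1) x = W (t+1) x')
    (x : Fin L → 𝕏) :
    stepKL μ X W t x = ∑ ω, condOn μ X (W t x) x ω * stepLogRatio μ X W t (X ω) := by
  rw [stepKL, batchLaw, KLdiv_distOf]
  refine sum_congr rfl fun ω _ => ?_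
  by_cases hω : condOn μ X (W t x) x ω = 0
  · rw [hω, zero_mul, zero_mul]
  · have hag := restr_eq_restr_iff.mp (restr_eq_of_condOn_ne_zero hω)
    exact congrArg _ (stepLogRatio_eq_of_agree hstop hadapt fun i hi => (hag i hi).symm)

theorem stepKL_eq_zero (hμ : ∀ ω, 0 ≤ μ ω) {t : ℕ} {x : Fin L → 𝕏}
    (hx : 0 < distOf μ X x) (hbatch : batch W t x = ∅) : stepKL μ X W t x = 0 := by
  have : IsEmpty (batch W t x) := isEmpty_coe_sort.mpr hbatch
  have hmass : ∑ ω, condOn μ X (W t x) x ω = 1 :=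
    sum_pcond (hx.trans_le (distOf_le_cylinderMass hμ X (W t x) x)).ne'
  exact KLdiv_distOf_prod_of_isEmpty hmass fun ω => restr (batch W t x) (X ω)

end AdaptiveSampler

section Decomposition

variable {Ω 𝕏 : Type*} [Fintype Ω] [Fintype 𝕏] [DecidableEq 𝕏] {L : ℕ}
variable {μ : Ω → ℝ} {X : Ω → Fin L → 𝕏} {W : ℕ → (Fin L → 𝕏) → Finset (Fin L)}
  {T : (Fin L → 𝕏) → ℕ}

theorem log_div_samplerDensity (hμ : ∀ ω, 0 ≤ μ ω) (hμ1 : ∑ ω, μ ω = 1)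
    (hW0 : ∀ x, W 0 x = ∅) (hmono : ∀ x t, W t x ⊆ W (t+1) x)
    (hfull : ∀ x, W (T x) x = univ) {N : ℕ} {x : Fin L → 𝕏} (hN : T x ≤ N)
    (hx : 0 < distOf μ X x) :
    Real.log (distOf μ X x / samplerDensity μ X W T x) =
      ∑ t ∈ range N, stepLogRatio μ X W t x := by
  set m : ℕ → ℝ := fun t => cylinderMass μ X (W t x) x
  set P : ℕ → ℝ := fun t => batchProdLaw μ X (W t x) (batch W t x) x (restr (batch W t x) x)
  have hm : ∀ t, 0 < m t := fun t => hx.trans_le (distOf_le_cylinderMass hμ X _ x)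
  have hP : ∀ t, 0 < P t := fun t => prod_pos fun i _ => distOf_condOn_coord_pos hμ X _ hx i
  have hJ : ∀ t, batchLaw μ X (W t x) (batch W t x) x (restr (batch W t x) x) = m (t+1) / m t :=
    fun t => distOf_condOn_restr_sdiff μ X (hmono x t) x
  have hq : samplerDensity μ X W T x = ∏ t ∈ range N, P t := by
    refine (prod_subset (range_subset_range.mpr hN) fun t _ ht => ?_).trans
      (prod_congr rfl fun t _ => (prod_coe_sort _ _).symm)
    rw [batch_eq_empty_of_le hmono hfull (not_lt.mp (mem_range.not.mp ht)), prod_empty]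
  have hp : Real.log (distOf μ X x) = ∑ t ∈ range N, (Real.log (m (t+1)) - Real.log (m t)) := by
    rw [sum_range_sub (fun t => Real.log (m t))]
    simp only [m]
    rw [eq_univ_of_le hmono hfull hN, cylinderMass_univ, hW0, cylinderMass_empty hμ1,
      Real.log_one, sub_zero]
  rw [hq, Real.log_div hx.ne' (prod_pos fun t _ => hP t).ne',
    Real.log_prod fun t _ => (hP t).ne', hp, ← sum_sub_distrib]
  refine sum_congr rfl fun t _ => ?_
  rw [stepLogRatio, hJ, Real.log_div (div_pos (hm _) (hm _)).ne' (hP t).ne',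
    Real.log_div (hm _).ne' (hm _).ne']

theorem KLdiv_samplerDensity (hμ : ∀ ω, 0 ≤ μ ω) (hμ1 : ∑ ω, μ ω = 1)
    (hW0 : ∀ x, W 0 x = ∅) (hmono : ∀ x t, W t x ⊆ W (t+1) x)
    (hfull : ∀ x, W (T x) x = univ) {N : ℕ} (hN : ∀ x, T x ≤ N) :
    KLdiv (distOf μ X) (samplerDensity μ X W T) =
      ∑ x, distOf μ X x * ∑ t ∈ range N, stepLogRatio μ X W t x :=
  sum_distOf_mul_congr hμ fun x hx => log_div_samplerDensity hμ hμ1 hW0 hmono hfull (hN x) hx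

theorem sum_distOf_mul_sum_stepKL_eq_range (hμ : ∀ ω, 0 ≤ μ ω)
    (hmono : ∀ x t, W t x ⊆ W (t+1) x) (hfull : ∀ x, W (T x) x = univ) {N : ℕ}
    (hN : ∀ x, T x ≤ N) :
    ∑ x, distOf μ X x * ∑ t ∈ range (T x), stepKL μ X W t x =
      ∑ x, distOf μ X x * ∑ t ∈ range N, stepKL μ X W t x :=
  sum_distOf_mul_congr hμ fun x hx => sum_subset (range_subset_range.mpr (hN x))
    fun _ _ ht => stepKL_eq_zero hμ hx (batch_eq_empty_of_le hmono hfull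
      (not_lt.mp (mem_range.not.mp ht)))

theorem sum_distOf_mul_stepKL (hμ : ∀ ω, 0 ≤ μ ω) (hW0 : ∀ x, W 0 x = ∅)
    (hmono : ∀ x t, W t x ⊆ W (t+1) x)
    (hadapt : ∀ t x x', W t x = W t x' → (∀ i ∈ W t x, x i = x' i) →
      W (t+1) x = W (t+1) x')
    (t : ℕ) :
    ∑ x, distOf μ X x * stepKL μ X W t x = ∑ x, distOf μ X x * stepLogRatio μ X W t x := by
  have hstop := isStoppingSet_of_adapted hW0 hmono hadapt t
  simp only [stepKL_eq_sum_condOn hstop hadapt]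
  exact hstop.sum_distOf_mul_sum_condOn hμ X _

end Decomposition

/-- The KL divergence between the data distribution and the factorized sampler equals the
expected sum over iterations of the pointwise KL between the true conditional joint of each
batch and the product of its conditional marginals, along the trajectory. -/
theorem KL_eq_expected_sum_batch_KL
    {Ω 𝕏 : Type*} [Fintype Ω] [Fintype 𝕏] [DecidableEq 𝕏] (L : ℕ)
    (μ : Ω → ℝ) (hmu0 : ∀ ω, 0 ≤ μ ω) (hmu1 : ∑ ω, μ ω = 1)
    (X : Ω → Fin L → 𝕏)
    (W : ℕ → (Fin L → 𝕏) → Finset (Fin L)) (T : (Fin L → 𝕏) → ℕ)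
    (hW0 : ∀ x, W 0 x = ∅)
    (hmono : ∀ x t, W t x ⊆ W (t+1) x)
    (hfull : ∀ x, W (T x) x = Finset.univ)
    (hadapt : ∀ t x x', W t x = W t x' → (∀ i ∈ W t x, x i = x' i) →
      W (t+1) x = W (t+1) x') :
    KLdiv (distOf μ X)
        (fun x => ∏ t ∈ Finset.range (T x), ∏ i ∈ W (t+1) x \ W t x,
          distOf (condOn μ X (W t x) x) (fun ω => X ω i) (x i)) =
      ∑ x, distOf μ X x * ∑ t ∈ Finset.range (T x),
        KLdiv (distOf (condOn μ X (W t x) x)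
            (fun ω => restr (W (t+1) x \ W t x) (X ω)))
          (fun y => ∏ i : ↥(W (t+1) x \ W t x),
            distOf (condOn μ X (W t x) x) (fun ω => X ω i.1) (y i)) := by
  obtain ⟨N, hN⟩ : ∃ N, ∀ x, T x ≤ N := ⟨univ.sup T, fun x => le_sup (mem_univ x)⟩
  have hswap : ∀ f : ℕ → (Fin L → 𝕏) → ℝ, ∑ x, distOf μ X x * ∑ t ∈ range N, f t x =
      ∑ t ∈ range N, ∑ x, distOf μ X x * f t x := fun f => by
    simp only [mul_sum]
    exact sum_comm
  calc KLdiv (distOf μ X) (samplerDensity μ X W T)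
      = ∑ x, distOf μ X x * ∑ t ∈ range N, stepLogRatio μ X W t x :=
        KLdiv_samplerDensity hmu0 hmu1 hW0 hmono hfull hN
    _ = ∑ x, distOf μ X x * ∑ t ∈ range N, stepKL μ X W t x := by
        rw [hswap, hswap]
        exact sum_congr rfl fun t _ => (sum_distOf_mul_stepKL hmu0 hW0 hmono hadapt t).symm
    _ = ∑ x, distOf μ X x * ∑ t ∈ range (T x), stepKL μ X W t x :=
        (sum_distOf_mul_sum_stepKL_eq_range hmu0 hmono hfull hN).symm
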